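/- arXiv:2512.11600 — 3 statements merged into one kernel-verified Lean document; each statement's English description precedes it below -/
import Mathlib

section
/- Let R and S be rings and P an (S,R)-bimodule such that P is finitely generated projective both as a right R-module and as a left S-module, and the natural ring maps S → End(P_R) and R → End(_S P) are isomorphisms. Then P is a generator of the category of left S-modules; that is, for every homomorphism f : X → Y of left S-modules, if Hom_S(P, f) = 0 then f = 0. -/
universe u

/-- Let `R`, `S` be rings and `P` an `(S,R)`-bimodule which is finitely generated
projective both as a right `R`-module (i.e. as an `Rᵐᵒᵖ`-module) and as a left `S`-module,
and such that the natural ring maps `S → End(P_R)` and `R → End(_S P)` (the latter written as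
`Rᵐᵒᵖ → End(_S P)`, sending `r` to right multiplication by `r`) are bijective.
Then `P` is a generator of the category of left `S`-modules: for every homomorphism
`f : X → Y` of left `S`-modules, if `Hom_S(P, f) = 0` then `f = 0`. -/
theorem rank_one_projective_bimodule_is_left_generator
    (R S : Type u) [Ring R] [Ring S] (P : Type u) [AddCommGroup P]
    [Module S P] [Module Rᵐᵒᵖ P] [SMulCommClass S Rᵐᵒᵖ P] [SMulCommClass Rᵐᵒᵖ S P]
    (hfinR : Module.Finite Rᵐᵒᵖ P) (hprojR : Module.Projective Rᵐᵒᵖ P)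
    (hfinS : Module.Finite S P) (hprojS : Module.Projective S P)
    (hS : Function.Bijective (Module.toModuleEnd Rᵐᵒᵖ P (S := S)))
    (hR : Function.Bijective (Module.toModuleEnd S P (S := Rᵐᵒᵖ)))
    (X Y : Type u) [AddCommGroup X] [Module S X] [AddCommGroup Y] [Module S Y]
    (f : X →ₗ[S] Y) (hf : ∀ g : P →ₗ[S] X, f ∘ₗ g = 0) : f = 0 := by
  classical
  -- finite presentation data: P is a direct summand of (Fin n → Rᵐᵒᵖ)
  obtain ⟨n, π, hπ⟩ := Module.Finite.exists_fin' Rᵐᵒᵖ P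
  obtain ⟨s, hs⟩ := Module.projective_lifting_property π LinearMap.id hπ
  -- ring equivalence S ≃ End(P_R)
  let e : S ≃+* Module.End Rᵐᵒᵖ P := RingEquiv.ofBijective _ hS
  -- the endomorphism y ↦ (s y i) • p
  let E : P → Fin n → Module.End Rᵐᵒᵖ P := fun p i =>
    { toFun := fun y => (s y i) • p
      map_add' := fun y z => by simp [add_smul]
      map_smul' := fun r y => by simp [mul_smul, smul_eq_mul] }
  have hE : ∀ (p : P) (i : Fin n) (y : P), (E p i) y = (s y i) • p := fun _ _ _ => rfl
  -- σ p i ∈ S corresponding to E p i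
  let σ : P → Fin n → S := fun p i => e.symm (E p i)
  have hσ : ∀ (p : P) (i : Fin n) (y : P), (σ p i) • y = (s y i) • p := by
    intro p i y
    have : Module.toModuleEnd Rᵐᵒᵖ P (σ p i) = E p i := e.apply_symm_apply (E p i)
    calc (σ p i) • y = (Module.toModuleEnd Rᵐᵒᵖ P (σ p i)) y := rfl
      _ = (E p i) y := by rw [this]
      _ = (s y i) • p := rfl
  have hσ_add : ∀ (p q : P) (i : Fin n), σ (p + q) i = σ p i + σ q i := by
    intro p q i
    have : E (p + q) i = E p i + E q i := by
      ext y; simp [hE, smul_add, LinearMap.add_apply]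
    simp only [σ, this, map_add]
  have hσ_smul : ∀ (c : S) (p : P) (i : Fin n), σ (c • p) i = c * σ p i := by
    intro c p i
    have : E (c • p) i = (Module.toModuleEnd Rᵐᵒᵖ P (S := S) c) * E p i := by
      ext y
      show (s y i) • (c • p) = c • ((s y i) • p)
      exact smul_comm _ _ _
    have h2 : σ (c • p) i = e.symm (e c * E p i) := by
      simp only [σ, this]; rfl
    rw [h2, map_mul, e.symm_apply_apply]
  -- dual basis elements
  let pB : Fin n → P := fun i => π (Pi.single i 1)
  -- the sum of σ (pB i) i is 1
  have hsum : ∑ i, σ (pB i) i = 1 := by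
    apply hS.injective
    rw [map_sum, map_one]
    ext y
    have : ∀ i, (Module.toModuleEnd Rᵐᵒᵖ P (S := S) (σ (pB i) i)) y = (s y i) • pB i := by
      intro i
      show (σ (pB i) i) • y = _
      exact hσ _ _ _
    rw [LinearMap.sum_apply]
    simp only [this]
    have : ∀ i, (s y i) • pB i = π (Pi.single i (s y i)) := by
      intro i
      rw [← map_smul]
      congr 1
      rw [← Pi.single_smul, smul_eq_mul, mul_one]
    simp only [this, ← map_sum, Finset.univ_sum_single]
    have := congrArg (fun g => g y) hs
    simpa using this
  -- conclude
  ext x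
  have hx : ∀ i : Fin n, f ((σ (pB i) i) • x) = 0 := by
    intro i
    let g : P →ₗ[S] X :=
      { toFun := fun p => (σ p i) • x
        map_add' := fun p q => by show σ (p + q) i • x = σ p i • x + σ q i • x; rw [hσ_add, add_smul]
        map_smul' := fun c p => by show σ (c • p) i • x = c • (σ p i • x); rw [hσ_smul, mul_smul] }
    have := congrArg (fun h => h (pB i)) (hf g)
    simpa [g] using this
  have : f ((∑ i, σ (pB i) i) • x) = 0 := by
    rw [Finset.sum_smul, map_sum]
    exact Finset.sum_eq_zero fun i _ => hx i
  rw [hsum, one_smul] at this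
  simpa using this
end

section
/- Let T be an (S,R)-bimodule and T' an (S',R)-bimodule. Suppose there exist an invertible (S,S')-bimodule P and an invertible (S',S)-bimodule Q with T ≅ P ⊗_{S'} T' and T' ≅ Q ⊗_S T as right R-modules. Then Prod(T_R) = Prod(T'_R), where Prod(M) denotes the class of right R-modules isomorphic to a direct summand of a direct product of copies of M. -/
/-!
If `e : S'-Mod ≌ S-Mod` carries `T'` to `T`, then with `Q := e⁻¹(S)` we get
`T ≅ Hom_S(S, e T') ≅ Hom_{S'}(Q, T')`, and this is `R`-linear because the right `R`-action on `T`
is `e` applied to the one on `T'`. Being the image of a projective module under an equivalence,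
`Q` is a retract of a free module `S'^(Q)`, so `Hom_{S'}(Q, T')` is a retract of `T'^Q`. Hence
`T ∈ Prod(T')`, symmetrically `T' ∈ Prod(T)`, and `Prod` is transitive.
-/

noncomputable section
open CategoryTheory

universe u

/-- Right multiplication by `r : R` on an `(S,R)`-bimodule, as an `S`-linear map. -/
def rAct (R : Type u) {S M : Type u} [Ring R] [Ring S] [AddCommGroup M] [Module S M]
    [Module Rᵐᵒᵖ M] [SMulCommClass S Rᵐᵒᵖ M] (r : R) : M →ₗ[S] M where
  toFun x := MulOpposite.op r • x
  map_add' := smul_add _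
  map_smul' s x := (smul_comm s (MulOpposite.op r) x).symm

/-- There is an invertible `(S,S')`-bimodule `P` with `T ≅ P ⊗_{S'} T'` as right `R`-modules;
formulated (Eilenberg–Watts) as: there is an equivalence `e : S'-Mod ≌ S-Mod` together with an
additive isomorphism `e(T') ≅ T` intertwining the right `R`-actions. -/
def TwistedBy (R : Type u) [Ring R] (S : Type u) [Ring S] (T : Type u) [AddCommGroup T]
    [Module S T] [Module Rᵐᵒᵖ T] [SMulCommClass S Rᵐᵒᵖ T]
    (S' : Type u) [Ring S'] (T' : Type u) [AddCommGroup T'] [Module S' T']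
    [Module Rᵐᵒᵖ T'] [SMulCommClass S' Rᵐᵒᵖ T'] : Prop :=
  ∃ e : ModuleCat.{u} S' ≌ ModuleCat.{u} S,
    ∃ ψ : (e.functor.obj (ModuleCat.of S' T')) ≃+ T,
      ∀ (r : R) (x : e.functor.obj (ModuleCat.of S' T')),
        ψ (e.functor.map (ModuleCat.ofHom (rAct R r)) x) = MulOpposite.op r • ψ x

/-- `M` is a direct summand of a direct product of copies of `T` (as `A`-modules). -/
def InProd (A : Type u) [Ring A] (T : Type u) [AddCommGroup T] [Module A T]
    (M : Type u) [AddCommGroup M] [Module A M] : Prop :=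
  ∃ (I : Type u) (ι : M →ₗ[A] (I → T)) (π : (I → T) →ₗ[A] M), π ∘ₗ ι = LinearMap.id

namespace InProd

variable {A : Type u} [Ring A] {T T' M N : Type u} [AddCommGroup T] [Module A T]
  [AddCommGroup T'] [Module A T'] [AddCommGroup M] [Module A M] [AddCommGroup N] [Module A N]

theorem self_pi (I : Type u) : InProd A T (I → T) :=
  ⟨I, .id, .id, rfl⟩

theorem of_retract (h : InProd A T N) (ι : M →ₗ[A] N) (π : N →ₗ[A] M) (hπι : π ∘ₗ ι = .id) :
    InProd A T M := by
  obtain ⟨I, ι', π', hπι'⟩ := h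
  refine ⟨I, ι' ∘ₗ ι, π ∘ₗ π', ?_⟩
  rw [LinearMap.comp_assoc, ← LinearMap.comp_assoc ι, hπι', LinearMap.id_comp, hπι]

theorem of_linearEquiv (h : InProd A T M) (e : M ≃ₗ[A] N) : InProd A T N :=
  h.of_retract e.symm.toLinearMap e.toLinearMap (by ext; simp)

theorem pi (h : InProd A T' T) (I : Type u) : InProd A T' (I → T) := by
  obtain ⟨J, ι, π, hπι⟩ := h
  refine ((self_pi (I × J)).of_linearEquiv (LinearEquiv.curry A T' I J)).of_retract
    (LinearMap.piMap fun _ => ι) (LinearMap.piMap fun _ => π) ?_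
  ext x i
  simp [← LinearMap.comp_apply, hπι]

theorem trans (hM : InProd A T M) (hT : InProd A T' T) : InProd A T' M := by
  obtain ⟨I, ι, π, hπι⟩ := hM
  exact (hT.pi I).of_retract ι π hπι

end InProd

theorem inProd_linearMap_of_projective {S A Q N : Type u} [Ring S] [Ring A]
    [AddCommGroup Q] [Module S Q] [Module.Projective S Q]
    [AddCommGroup N] [Module S N] [Module A N] [SMulCommClass S A N] :
    InProd A N (Q →ₗ[S] N) := by
  obtain ⟨s, hs⟩ := Module.projective_def'.mp ‹Module.Projective S Q›
  refine ((InProd.self_pi Q).of_linearEquiv (Finsupp.llift N S A Q)).of_retract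
    (LinearMap.lcomp A N (Finsupp.linearCombination S id)) (LinearMap.lcomp A N s) ?_
  ext f : 1
  simp [LinearMap.lcomp_apply', LinearMap.comp_assoc, hs]

namespace TwistedBy

variable {R S T S' T' : Type u} [Ring R] [Ring S] [AddCommGroup T] [Module S T]
  [Module Rᵐᵒᵖ T] [SMulCommClass S Rᵐᵒᵖ T] [Ring S'] [AddCommGroup T'] [Module S' T']
  [Module Rᵐᵒᵖ T'] [SMulCommClass S' Rᵐᵒᵖ T']

theorem exists_linearEquiv (h : TwistedBy R S T S' T') :
    ∃ Q : ModuleCat.{u} S', Module.Projective S' Q ∧ Nonempty ((Q →ₗ[S'] T') ≃ₗ[Rᵐᵒᵖ] T) := by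
  obtain ⟨e, ψ, hψ⟩ := h
  have : e.symm.functor.Additive := Functor.additive_of_preserves_binary_products _
  let Q := e.symm.functor.obj (ModuleCat.of S S)
  have : Projective Q := (e.symm.map_projective_iff _).mpr inferInstance
  let Φ : (Q →ₗ[S'] T') ≃+ T :=
    ModuleCat.homAddEquiv.symm.trans <|
      (e.symm.toAdjunction.homAddEquiv (ModuleCat.of S S) (ModuleCat.of S' T')).trans <|
        ModuleCat.homAddEquiv.trans <| (LinearMap.ringLmapEquivSelf S ℕ _).toAddEquiv.trans ψ
  refine ⟨Q, inferInstance, ⟨{ Φ with map_smul' := ?_ }⟩⟩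
  intro c f
  induction c using MulOpposite.rec' with | h r => ?_
  have hcomp : ModuleCat.homAddEquiv.symm (MulOpposite.op r • f) =
      ModuleCat.homAddEquiv.symm f ≫ ModuleCat.ofHom (rAct R r) := rfl
  change Φ (MulOpposite.op r • f) = MulOpposite.op r • Φ f
  simp only [Φ, AddEquiv.trans_apply, hcomp, Adjunction.homAddEquiv_apply,
    Adjunction.homEquiv_naturality_right]
  exact hψ r _

theorem inProd (h : TwistedBy R S T S' T') : InProd Rᵐᵒᵖ T' T := by
  obtain ⟨Q, _, ⟨Φ⟩⟩ := h.exists_linearEquiv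
  exact inProd_linearMap_of_projective.of_linearEquiv Φ

end TwistedBy

/-- if `T` is an `(S,R)`-bimodule and `T'` an `(S',R)`-bimodule with
`T ≅ P ⊗_{S'} T'` and `T' ≅ Q ⊗_S T` as right `R`-modules for some invertible bimodules
`P`, `Q`, then `Prod(T_R) = Prod(T'_R)`. -/
theorem prod_eq_of_sim (R : Type u) [Ring R]
    (S : Type u) [Ring S] (T : Type u) [AddCommGroup T] [Module S T] [Module Rᵐᵒᵖ T]
    [SMulCommClass S Rᵐᵒᵖ T]
    (S' : Type u) [Ring S'] (T' : Type u) [AddCommGroup T'] [Module S' T']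
    [Module Rᵐᵒᵖ T'] [SMulCommClass S' Rᵐᵒᵖ T']
    (h₁ : TwistedBy R S T S' T') (h₂ : TwistedBy R S' T' S T)
    (X : Type u) [AddCommGroup X] [Module Rᵐᵒᵖ X] :
    InProd Rᵐᵒᵖ T X ↔ InProd Rᵐᵒᵖ T' X :=
  ⟨fun h => h.trans h₁.inProd, fun h => h.trans h₂.inProd⟩

end
end

section
/- Let C be a precovering subcategory of right R-modules that contains all projective modules and is closed under extensions, with an Ext-injective weak cogenerator C_0 (C_0 ∈ C, Ext^{i≥1}_R(X, C_0) = 0 for all X ∈ C, and every M ∈ C embeds in a module in Prod(C_0) with cokernel in C). Then every module N with Ext^{i≥1}_R(X,N) = 0 for all X ∈ C admits an exact sequence ⋯ → C_1 → C_0' → N → 0 with each C_i ∈ Prod(C_0) ∩ C and all kernels satisfying Ext^{i≥1}_R(X, ker) = 0 for all X ∈ C. -/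
noncomputable section
open CategoryTheory

universe u

/-- Vanishing of `Ext^i_A(M, N)` for `A`-modules `M`, `N`. -/
def extVanish (A : Type u) [Ring A] (i : ℕ) (M N : Type u) [AddCommGroup M] [Module A M]
    [AddCommGroup N] [Module A N] : Prop :=
  Subsingleton
    (((Ext ℤ (ModuleCat.{u} A) i).obj (Opposite.op (ModuleCat.of A M))).obj (ModuleCat.of A N))

/-!
For `N ∈ 𝒞^⟂`, take a `𝒞`-precover `C → N` and embed `C` into some `W ∈ Prod(C₀)` with cokernel
`M ∈ 𝒞`. As `Ext¹(M, N) = 0`, the precover extends to `v : W → N`, which is again a (hence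
surjective) `𝒞`-precover, and `W ∈ 𝒞` by closure under extensions. Ext-vanishing passes from `C₀`
to products and retracts, so `W ∈ 𝒞^⟂`; the long exact Ext sequence of `0 → ker v → W → N → 0`,
together with the surjectivity of `Hom(X, W) → Hom(X, N)` for `X ∈ 𝒞`, then puts `ker v` in
`𝒞^⟂`, and we iterate on `ker v`. Ext is computed from a projective resolution `P` of `X`:
`Ext^(n+1)(X, Y) = 0` means that every `(n+1)`-cocycle `P_{n+1} → Y` is a coboundary.
-/

namespace CategoryTheory.ProjectiveResolution

open Limits

section General

variable {C : Type*} [Category C] [Abelian C] {X : C} (P : ProjectiveResolution X)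

/-- Exactness of `Hom(P, Y)` in degree `n + 1` (not `n`). -/
def HomExactAt (Y : C) (n : ℕ) : Prop :=
  ∀ c : P.complex.X (n + 1) ⟶ Y, P.complex.d (n + 2) (n + 1) ≫ c = 0 →
    ∃ h : P.complex.X n ⟶ Y, P.complex.d (n + 1) n ≫ h = c

theorem subsingleton_ext_succ_iff [Linear ℤ C] [EnoughProjectives C] (Y : C) (n : ℕ) :
    Subsingleton (((Ext ℤ C (n + 1)).obj (Opposite.op X)).obj Y) ↔ P.HomExactAt Y n := by
  rw [((forget (ModuleCat ℤ)).mapIso (P.isoExt (n + 1) Y)).toEquiv.subsingleton_congr,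
    ← ModuleCat.isZero_iff_subsingleton, ← HomologicalComplex.exactAt_iff_isZero_homology,
    HomologicalComplex.exactAt_iff' _ n (n + 1) (n + 2) (by simp) (by simp),
    ShortComplex.moduleCat_exact_iff]
  rfl

variable {P}

theorem HomExactAt.of_retract {Y Z : C} {n : ℕ} (h : P.HomExactAt Z n) (i : Y ⟶ Z) (r : Z ⟶ Y)
    (hri : i ≫ r = 𝟙 Y) : P.HomExactAt Y n := by
  intro c hc
  obtain ⟨e, he⟩ := h (c ≫ i) (by rw [← Category.assoc, hc, zero_comp])
  exact ⟨e ≫ r, by rw [← Category.assoc, he, Category.assoc, hri, Category.comp_id]⟩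

end General

variable {A : Type u} [Ring A] {X : ModuleCat.{u} A} {P : ProjectiveResolution X}

theorem HomExactAt.pi {ι : Type u} {M : ι → Type u} [∀ i, AddCommGroup (M i)]
    [∀ i, Module A (M i)] {n : ℕ} (h : ∀ i, P.HomExactAt (ModuleCat.of A (M i)) n) :
    P.HomExactAt (ModuleCat.of A (∀ i, M i)) n := by
  intro c hc
  choose e he using fun i ↦ h i (c ≫ ModuleCat.ofHom (LinearMap.proj i))
    (by rw [← Category.assoc, hc, zero_comp])
  refine ⟨ModuleCat.ofHom (LinearMap.pi fun i ↦ (e i).hom), ?_⟩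
  ext x
  exact congr($(he _) x)

theorem HomExactAt.ker {W N : ModuleCat.{u} A} {g : W ⟶ N} (hg : Function.Surjective g)
    (hlift : ∀ φ : X ⟶ N, ∃ ψ : X ⟶ W, ψ ≫ g = φ)
    (hW : ∀ n, P.HomExactAt W n) (hN : ∀ n, P.HomExactAt N n) (n : ℕ) :
    P.HomExactAt (ModuleCat.of A (LinearMap.ker g.hom)) n := by
  have : Epi g := (ModuleCat.epi_iff_surjective g).2 hg
  let ι : ModuleCat.of A (LinearMap.ker g.hom) ⟶ W :=
    ModuleCat.ofHom (LinearMap.ker g.hom).subtype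
  have hιg : ι ≫ g = 0 := by ext x; exact x.2
  have : Mono ι := (ModuleCat.mono_iff_injective ι).2 Subtype.val_injective
  intro c hc
  obtain ⟨a, ha⟩ := hW n (c ≫ ι) (by rw [← Category.assoc, hc, zero_comp])
  have hag : P.complex.d (n + 1) n ≫ a ≫ g = 0 := by
    rw [← Category.assoc, ha, Category.assoc, hιg, comp_zero]
  -- correct `a` by a map killing `d` so that it lands in the kernel
  obtain ⟨b, hbg, hdb⟩ : ∃ b : P.complex.X n ⟶ W, b ≫ g = a ≫ g ∧
      P.complex.d (n + 1) n ≫ b = 0 := by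
    cases n with
    | zero =>
      obtain ⟨φ, hφ⟩ := CokernelCofork.IsColimit.desc' P.isColimitCokernelCofork _ hag
      obtain ⟨ψ, rfl⟩ := hlift φ
      exact ⟨P.cokernelCofork.π ≫ ψ, (Category.assoc _ _ _).trans hφ,
        (Category.assoc _ _ _).symm.trans (by rw [CokernelCofork.condition]; exact zero_comp)⟩
    | succ m =>
      obtain ⟨e, he⟩ := hN m _ hag
      exact ⟨P.complex.d (m + 1) m ≫ Projective.factorThru e g, by simp [he], by simp⟩
  have hab : ∀ x, (a - b) x ∈ LinearMap.ker g.hom := fun x ↦ by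
    simpa [sub_eq_zero] using congr($(hbg) x).symm
  refine ⟨ModuleCat.ofHom ((a - b).hom.codRestrict _ hab), (cancel_mono ι).1 ?_⟩
  rw [Category.assoc, ← ha, ← sub_zero (P.complex.d (n + 1) n ≫ a), ← hdb, ← Preadditive.comp_sub]
  rfl

end CategoryTheory.ProjectiveResolution

theorem LinearMap.exists_comp_eq_of_surjective_of_ker_le {R M N P : Type*} [Ring R]
    [AddCommGroup M] [AddCommGroup N] [AddCommGroup P] [Module R M] [Module R N] [Module R P]
    {φ : M →ₗ[R] N} (hφ : Function.Surjective φ) {ψ : M →ₗ[R] P}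
    (hker : LinearMap.ker φ ≤ LinearMap.ker ψ) : ∃ v : N →ₗ[R] P, v ∘ₗ φ = ψ :=
  ⟨(LinearMap.ker φ).liftQ ψ hker ∘ₗ (φ.quotKerEquivOfSurjective hφ).symm.toLinearMap,
    LinearMap.ext fun x ↦ by simp⟩

theorem LinearMap.exists_comp_eq_of_range_le {R M N P : Type*} [Ring R]
    [AddCommGroup M] [AddCommGroup N] [AddCommGroup P] [Module R M] [Module R N] [Module R P]
    {f : M →ₗ[R] N} (hf : Function.Injective f) {ψ : P →ₗ[R] N}
    (hrange : LinearMap.range ψ ≤ LinearMap.range f) : ∃ v : P →ₗ[R] M, f ∘ₗ v = ψ :=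
  ⟨(LinearEquiv.ofInjective f hf).symm.toLinearMap ∘ₗ ψ.codRestrict _ fun x ↦ hrange ⟨x, rfl⟩,
    LinearMap.ext fun x ↦ by simp⟩

-- The square `(d, β; α, f)` is a pushout, as it maps the presentation `Q₁ → Q₀ → M → 0`
-- to `K → W → M → 0` over the identity of `M`.
theorem LinearMap.exists_comp_eq_of_exact_square {R Q₁ Q₀ K W M N : Type*} [Ring R]
    [AddCommGroup Q₁] [AddCommGroup Q₀] [AddCommGroup K] [AddCommGroup W] [AddCommGroup M]
    [AddCommGroup N] [Module R Q₁] [Module R Q₀] [Module R K] [Module R W] [Module R M]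
    [Module R N] {d : Q₁ →ₗ[R] Q₀} {ε : Q₀ →ₗ[R] M} (hε : Function.Surjective ε)
    (hdε : Function.Exact d ε) {f : K →ₗ[R] W} {g : W →ₗ[R] M} (hf : Function.Injective f)
    (hfg : Function.Exact f g) {α : Q₀ →ₗ[R] W} {β : Q₁ →ₗ[R] K} (hα : g ∘ₗ α = ε)
    (hβ : f ∘ₗ β = α ∘ₗ d) {h : Q₀ →ₗ[R] N} {u : K →ₗ[R] N} (hh : h ∘ₗ d = u ∘ₗ β) :
    ∃ v : W →ₗ[R] N, v ∘ₗ f = u := by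
  have hφ : Function.Surjective (α.coprod f) := by
    intro w
    obtain ⟨p, hp⟩ := hε (g w)
    obtain ⟨c, hc⟩ := hfg.linearMap_ker_eq ▸ (show w - α p ∈ LinearMap.ker g by
      rw [mem_ker, map_sub, ← comp_apply g α, hα, hp, sub_self])
    exact ⟨(p, c), by simp [hc]⟩
  have hker : LinearMap.ker (α.coprod f) ≤ LinearMap.ker (h.coprod u) := by
    rintro ⟨p, c⟩ hpc
    have hpc : α p = -f c := eq_neg_of_add_eq_zero_left hpc
    obtain ⟨q, rfl⟩ := (hdε p).1 (by rw [← hα, comp_apply, hpc, map_neg,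
      hfg.apply_apply_eq_zero, neg_zero])
    have hc : c = -β q := hf (by rw [map_neg, ← comp_apply, hβ, comp_apply, hpc, neg_neg])
    rw [mem_ker, coprod_apply, hc, map_neg, ← sub_eq_add_neg, sub_eq_zero, ← comp_apply, hh,
      comp_apply]
  obtain ⟨v, hv⟩ := exists_comp_eq_of_surjective_of_ker_le hφ hker
  refine ⟨v, ext fun c ↦ ?_⟩
  simpa only [comp_apply, coprod_apply, map_zero, zero_add] using congr($hv (0, c))

section

variable {A : Type u} [Ring A]

theorem exists_comp_eq_of_extVanish_one {K W M N : Type u} [AddCommGroup K] [Module A K]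
    [AddCommGroup W] [Module A W] [AddCommGroup M] [Module A M] [AddCommGroup N] [Module A N]
    {f : K →ₗ[A] W} {g : W →ₗ[A] M} (hf : Function.Injective f) (hg : Function.Surjective g)
    (hfg : Function.Exact f g) (hM : extVanish A 1 M N) (u : K →ₗ[A] N) :
    ∃ v : W →ₗ[A] N, v ∘ₗ f = u := by
  let P := ProjectiveResolution.of (ModuleCat.of A M)
  let ε : P.complex.X 0 ⟶ ModuleCat.of A M := P.cokernelCofork.π
  let S₀ := ShortComplex.mk _ ε P.cokernelCofork.condition
  have hdε : Function.Exact S₀.f.hom ε.hom := LinearMap.exact_iff.2 <|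
    (S₀.moduleCat_exact_iff_range_eq_ker.1 <|
      S₀.exact_of_g_is_cokernel P.isColimitCokernelCofork).symm
  have hε : Function.Surjective ε := (ModuleCat.epi_iff_surjective _).1
    (Limits.epi_of_isColimit_cofork P.isColimitCokernelCofork)
  have : Epi (ModuleCat.ofHom g) := (ModuleCat.epi_iff_surjective _).2 hg
  let α := Projective.factorThru ε (ModuleCat.ofHom g)
  have hα : g ∘ₗ α.hom = ε.hom := congr($(Projective.factorThru_comp ε _).hom)
  obtain ⟨β, hβ⟩ := LinearMap.exists_comp_eq_of_range_le hf (ψ := α.hom ∘ₗ S₀.f.hom) (by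
    rintro _ ⟨q, rfl⟩
    rw [← hfg.linearMap_ker_eq, LinearMap.mem_ker, ← LinearMap.comp_apply, ← LinearMap.comp_assoc,
      hα]
    exact hdε.apply_apply_eq_zero q)
  obtain ⟨h, hh⟩ := (P.subsingleton_ext_succ_iff _ 0).1 hM (ModuleCat.ofHom (u ∘ₗ β)) (by
    ext q
    have hdd : P.complex.d 1 0 (P.complex.d 2 1 q) = 0 := by
      rw [← ConcreteCategory.comp_apply, HomologicalComplex.d_comp_d]; rfl
    have : β (P.complex.d 2 1 q) = 0 := hf (by
      rw [← LinearMap.comp_apply f, hβ, LinearMap.comp_apply, map_zero]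
      exact (congrArg α.hom hdd).trans (map_zero _))
    simp [this])
  exact LinearMap.exists_comp_eq_of_exact_square hε hdε hf hfg hα hβ (congrArg ModuleCat.Hom.hom hh)

def ExtPerp (𝒞 : ModuleCat.{u} A → Prop) (N : Type u) [AddCommGroup N] [Module A N] : Prop :=
  ∀ X : ModuleCat.{u} A, 𝒞 X → ∀ i : ℕ, 1 ≤ i → extVanish A i X N

def IsPrecover (𝒞 : ModuleCat.{u} A → Prop) {C N : Type u} [AddCommGroup C] [Module A C]
    [AddCommGroup N] [Module A N] (g : C →ₗ[A] N) : Prop :=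
  ∀ X : ModuleCat.{u} A, 𝒞 X → ∀ h : X →ₗ[A] N, ∃ k : X →ₗ[A] C, g ∘ₗ k = h

theorem forall_extVanish_iff_forall_homExactAt {X : ModuleCat.{u} A} (P : ProjectiveResolution X)
    (Y : ModuleCat.{u} A) : (∀ i, 1 ≤ i → extVanish A i X Y) ↔ ∀ n, P.HomExactAt Y n := by
  refine ⟨fun h n ↦ (P.subsingleton_ext_succ_iff Y n).1 (h (n + 1) n.succ_pos), fun h i hi ↦ ?_⟩
  obtain ⟨n, rfl⟩ := Nat.exists_eq_add_of_le' hi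
  exact (P.subsingleton_ext_succ_iff Y n).2 (h n)

variable {𝒞 : ModuleCat.{u} A → Prop}

theorem ExtPerp.of_inProd {T M : Type u} [AddCommGroup T] [Module A T] [AddCommGroup M]
    [Module A M] (hT : ExtPerp 𝒞 T) (hM : InProd A T M) : ExtPerp 𝒞 M := by
  obtain ⟨I, ι, π, hπι⟩ := hM
  intro X hX
  let P := ProjectiveResolution.of X
  have hT' := (forall_extVanish_iff_forall_homExactAt P (ModuleCat.of A T)).1 (hT X hX)
  exact (forall_extVanish_iff_forall_homExactAt P (ModuleCat.of A M)).2 fun n ↦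
    (ProjectiveResolution.HomExactAt.pi fun _ ↦ hT' n).of_retract
      (ModuleCat.ofHom ι) (ModuleCat.ofHom π) (ModuleCat.hom_ext hπι)

theorem ExtPerp.ker {W N : Type u} [AddCommGroup W] [Module A W] [AddCommGroup N] [Module A N]
    {g : W →ₗ[A] N} (hg : Function.Surjective g) (hpre : IsPrecover 𝒞 g)
    (hW : ExtPerp 𝒞 W) (hN : ExtPerp 𝒞 N) : ExtPerp 𝒞 (LinearMap.ker g) := by
  intro X hX
  let P := ProjectiveResolution.of X
  refine (forall_extVanish_iff_forall_homExactAt P (ModuleCat.of A (LinearMap.ker g))).2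
    (ProjectiveResolution.HomExactAt.ker (g := ModuleCat.ofHom g) hg (fun φ ↦ ?_)
      ((forall_extVanish_iff_forall_homExactAt P (ModuleCat.of A W)).1 (hW X hX))
      ((forall_extVanish_iff_forall_homExactAt P (ModuleCat.of A N)).1 (hN X hX)))
  obtain ⟨ψ, hψ⟩ := hpre X hX φ.hom
  exact ⟨ModuleCat.ofHom ψ, ModuleCat.hom_ext hψ⟩

theorem IsPrecover.surjective (hproj : ∀ P : ModuleCat.{u} A, Module.Projective A P → 𝒞 P)
    {C N : Type u} [AddCommGroup C] [Module A C] [AddCommGroup N] [Module A N]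
    {g : C →ₗ[A] N} (hg : IsPrecover 𝒞 g) : Function.Surjective g := by
  obtain ⟨k, hk⟩ := hg (ModuleCat.of A (N →₀ A)) (hproj _ inferInstance)
    (Finsupp.linearCombination A id)
  intro y
  obtain ⟨x, rfl⟩ := Finsupp.linearCombination_id_surjective A N y
  exact ⟨k x, congr($hk x)⟩

theorem exists_surjective_inProd_extPerp_ker
    (hprecover : ∀ N : ModuleCat.{u} A, ∃ (C : ModuleCat.{u} A) (g : C →ₗ[A] N),
      𝒞 C ∧ IsPrecover 𝒞 g)
    (hproj : ∀ P : ModuleCat.{u} A, Module.Projective A P → 𝒞 P)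
    (hext : ∀ (X Y Z : ModuleCat.{u} A) (f : X →ₗ[A] Y) (g : Y →ₗ[A] Z),
      Function.Injective f → Function.Surjective g → Function.Exact f g → 𝒞 X → 𝒞 Z → 𝒞 Y)
    {C₀ : Type u} [AddCommGroup C₀] [Module A C₀] (hC₀ : ExtPerp 𝒞 C₀)
    (hweak : ∀ M : ModuleCat.{u} A, 𝒞 M →
      ∃ (W M' : ModuleCat.{u} A) (f : M →ₗ[A] W) (g : W →ₗ[A] M'),
        InProd A C₀ W ∧ 𝒞 M' ∧
        Function.Injective f ∧ Function.Surjective g ∧ Function.Exact f g)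
    {N : ModuleCat.{u} A} (hN : ExtPerp 𝒞 N) :
    ∃ (W : ModuleCat.{u} A) (v : W →ₗ[A] N), (InProd A C₀ W ∧ 𝒞 W) ∧
      Function.Surjective v ∧ ExtPerp 𝒞 (LinearMap.ker v) := by
  obtain ⟨C, g, hC, hg⟩ := hprecover N
  obtain ⟨W, M, ι, q, hW, hM, hι, hq, hιq⟩ := hweak C hC
  obtain ⟨v, rfl⟩ := exists_comp_eq_of_extVanish_one hι hq hιq (hN M hM 1 le_rfl) g
  have hv : IsPrecover 𝒞 v := fun X hX φ ↦
    let ⟨k, hk⟩ := hg X hX φ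
    ⟨ι ∘ₗ k, hk⟩
  have hv_surj := hv.surjective hproj
  exact ⟨W, v, ⟨hW, hext _ _ _ ι q hι hq hιq hC hM⟩, hv_surj,
    (hC₀.of_inProd hW).ker hv_surj hv hN⟩

theorem exists_resolution_of_forall_exists_surjective {good perp : ModuleCat.{u} A → Prop}
    (step : ∀ N, perp N → ∃ (W : ModuleCat.{u} A) (v : W →ₗ[A] N),
      good W ∧ Function.Surjective v ∧ perp (ModuleCat.of A (LinearMap.ker v)))
    {N : ModuleCat.{u} A} (hN : perp N) :
    ∃ (C : ℕ → ModuleCat.{u} A) (f : C 0 →ₗ[A] N) (d : ∀ n, C (n + 1) →ₗ[A] C n),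
      (∀ n, good (C n)) ∧ Function.Surjective f ∧ Function.Exact (d 0) f ∧
      (∀ n, Function.Exact (d (n + 1)) (d n)) ∧ perp (ModuleCat.of A (LinearMap.ker f)) ∧
      ∀ n, perp (ModuleCat.of A (LinearMap.ker (d n))) := by
  choose W v hgood hsurj hker using step
  let K : ℕ → {N // perp N} := fun n ↦ Nat.rec ⟨N, hN⟩ (fun _ K ↦ ⟨_, hker K.1 K.2⟩) n
  let f n := v (K n).1 (K n).2
  let d n := (LinearMap.ker (f n)).subtype ∘ₗ f (n + 1)
  have hexact n : Function.Exact (d n) (f n) :=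
    ((hsurj _ _).comp_exact_iff_exact).2 (LinearMap.exact_subtype_ker_map _)
  have hkerd n : LinearMap.ker (d n) = LinearMap.ker (f (n + 1)) :=
    LinearMap.ker_comp_of_ker_eq_bot _ (Submodule.ker_subtype _)
  refine ⟨fun n ↦ W (K n).1 (K n).2, f 0, d, fun n ↦ hgood _ _, hsurj _ _, hexact 0,
    fun n ↦ (Submodule.injective_subtype _).comp_exact_iff_exact.2 (hexact (n + 1)), hker _ _,
    fun n ↦ ?_⟩
  rw [hkerd]
  exact hker _ _

end

theorem exists_prod_resolution_of_mem_perp_general (R : Type u) [Ring R]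
    (𝒞 : ModuleCat.{u} Rᵐᵒᵖ → Prop)
    -- `𝒞` is precovering:
    (hprecover : ∀ N : ModuleCat.{u} Rᵐᵒᵖ, ∃ (C' : ModuleCat.{u} Rᵐᵒᵖ)
      (g : C' →ₗ[Rᵐᵒᵖ] N), 𝒞 C' ∧
        ∀ X : ModuleCat.{u} Rᵐᵒᵖ, 𝒞 X → ∀ h : X →ₗ[Rᵐᵒᵖ] N,
          ∃ k : X →ₗ[Rᵐᵒᵖ] C', g ∘ₗ k = h)
    -- `𝒞` contains all projective modules:
    (hproj : ∀ P : ModuleCat.{u} Rᵐᵒᵖ, Module.Projective Rᵐᵒᵖ P → 𝒞 P)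
    -- `𝒞` is closed under extensions:
    (hext : ∀ (X Y Z : ModuleCat.{u} Rᵐᵒᵖ) (f : X →ₗ[Rᵐᵒᵖ] Y) (g : Y →ₗ[Rᵐᵒᵖ] Z),
      Function.Injective f → Function.Surjective g → Function.Exact f g →
      𝒞 X → 𝒞 Z → 𝒞 Y)
    -- `C₀` is an Ext-injective weak cogenerator for `𝒞`:
    (C₀ : Type u) [AddCommGroup C₀] [Module Rᵐᵒᵖ C₀]
    (hExtInj : ∀ X : ModuleCat.{u} Rᵐᵒᵖ, 𝒞 X → ∀ i : ℕ, 1 ≤ i → extVanish Rᵐᵒᵖ i X C₀)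
    (hweak : ∀ M : ModuleCat.{u} Rᵐᵒᵖ, 𝒞 M →
      ∃ (W M' : ModuleCat.{u} Rᵐᵒᵖ) (f : M →ₗ[Rᵐᵒᵖ] W) (g : W →ₗ[Rᵐᵒᵖ] M'),
        InProd Rᵐᵒᵖ C₀ W ∧ 𝒞 M' ∧
        Function.Injective f ∧ Function.Surjective g ∧ Function.Exact f g)
    -- conclusion:
    (N : ModuleCat.{u} Rᵐᵒᵖ)
    (hN : ∀ X : ModuleCat.{u} Rᵐᵒᵖ, 𝒞 X → ∀ i : ℕ, 1 ≤ i → extVanish Rᵐᵒᵖ i X N) :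
    ∃ (C : ℕ → ModuleCat.{u} Rᵐᵒᵖ) (f : C 0 →ₗ[Rᵐᵒᵖ] N)
      (d : ∀ n, C (n + 1) →ₗ[Rᵐᵒᵖ] C n),
      (∀ n, InProd Rᵐᵒᵖ C₀ (C n) ∧ 𝒞 (C n)) ∧
      Function.Surjective f ∧
      Function.Exact (d 0) f ∧
      (∀ n, Function.Exact (d (n + 1)) (d n)) ∧
      (∀ X : ModuleCat.{u} Rᵐᵒᵖ, 𝒞 X → ∀ i : ℕ, 1 ≤ i →
        extVanish Rᵐᵒᵖ i X (LinearMap.ker f)) ∧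
      (∀ n, ∀ X : ModuleCat.{u} Rᵐᵒᵖ, 𝒞 X → ∀ i : ℕ, 1 ≤ i →
        extVanish Rᵐᵒᵖ i X (LinearMap.ker (d n))) := by
  exact exists_resolution_of_forall_exists_surjective (good := fun W ↦ InProd Rᵐᵒᵖ C₀ W ∧ 𝒞 W)
    (perp := fun N ↦ ExtPerp 𝒞 N)
    (fun _ hN ↦ exists_surjective_inProd_extPerp_ker hprecover hproj hext hExtInj hweak hN) hN

/-- Let `𝒞` be a precovering class of right `R`-modules containing all
projectives and closed under extensions, with an Ext-injective weak cogenerator `C₀`.  Then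
every module `N ∈ 𝒞^⟂` admits an exact sequence `⋯ → C₁ → C₀' → N → 0` with each term in
`Prod(C₀) ∩ 𝒞` and all kernels in `𝒞^⟂`. -/
theorem exists_prod_resolution_of_mem_perp (R : Type u) [Ring R]
    (𝒞 : ModuleCat.{u} Rᵐᵒᵖ → Prop)
    -- `𝒞` is precovering:
    (hprecover : ∀ N : ModuleCat.{u} Rᵐᵒᵖ, ∃ (C' : ModuleCat.{u} Rᵐᵒᵖ)
      (g : C' →ₗ[Rᵐᵒᵖ] N), 𝒞 C' ∧
        ∀ X : ModuleCat.{u} Rᵐᵒᵖ, 𝒞 X → ∀ h : X →ₗ[Rᵐᵒᵖ] N,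
          ∃ k : X →ₗ[Rᵐᵒᵖ] C', g ∘ₗ k = h)
    -- `𝒞` contains all projective modules:
    (hproj : ∀ P : ModuleCat.{u} Rᵐᵒᵖ, Module.Projective Rᵐᵒᵖ P → 𝒞 P)
    -- `𝒞` is closed under extensions:
    (hext : ∀ (X Y Z : ModuleCat.{u} Rᵐᵒᵖ) (f : X →ₗ[Rᵐᵒᵖ] Y) (g : Y →ₗ[Rᵐᵒᵖ] Z),
      Function.Injective f → Function.Surjective g → Function.Exact f g →
      𝒞 X → 𝒞 Z → 𝒞 Y)
    -- `C₀` is an Ext-injective weak cogenerator for `𝒞`: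
    (C₀ : Type u) [AddCommGroup C₀] [Module Rᵐᵒᵖ C₀]
    (hC₀ : 𝒞 (ModuleCat.of Rᵐᵒᵖ C₀))
    (hExtInj : ∀ X : ModuleCat.{u} Rᵐᵒᵖ, 𝒞 X → ∀ i : ℕ, 1 ≤ i → extVanish Rᵐᵒᵖ i X C₀)
    (hweak : ∀ M : ModuleCat.{u} Rᵐᵒᵖ, 𝒞 M →
      ∃ (W M' : ModuleCat.{u} Rᵐᵒᵖ) (f : M →ₗ[Rᵐᵒᵖ] W) (g : W →ₗ[Rᵐᵒᵖ] M'),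
        InProd Rᵐᵒᵖ C₀ W ∧ 𝒞 M' ∧
        Function.Injective f ∧ Function.Surjective g ∧ Function.Exact f g)
    -- conclusion:
    (N : ModuleCat.{u} Rᵐᵒᵖ)
    (hN : ∀ X : ModuleCat.{u} Rᵐᵒᵖ, 𝒞 X → ∀ i : ℕ, 1 ≤ i → extVanish Rᵐᵒᵖ i X N) :
    ∃ (C : ℕ → ModuleCat.{u} Rᵐᵒᵖ) (f : C 0 →ₗ[Rᵐᵒᵖ] N)
      (d : ∀ n, C (n + 1) →ₗ[Rᵐᵒᵖ] C n),
      (∀ n, InProd Rᵐᵒᵖ C₀ (C n) ∧ 𝒞 (C n)) ∧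
      Function.Surjective f ∧
      Function.Exact (d 0) f ∧
      (∀ n, Function.Exact (d (n + 1)) (d n)) ∧
      (∀ X : ModuleCat.{u} Rᵐᵒᵖ, 𝒞 X → ∀ i : ℕ, 1 ≤ i →
        extVanish Rᵐᵒᵖ i X (LinearMap.ker f)) ∧
      (∀ n, ∀ X : ModuleCat.{u} Rᵐᵒᵖ, 𝒞 X → ∀ i : ℕ, 1 ≤ i →
        extVanish Rᵐᵒᵖ i X (LinearMap.ker (d n))) :=
  exists_prod_resolution_of_mem_perp_general R 𝒞 hprecover hproj hext C₀ hExtInj hweak N hN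

end
end
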